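/- arXiv:1606.07750 — 3 statements merged into one kernel-verified Lean document; each statement's English description precedes it below -/
import Mathlib

section
/- Let n > 1 be an even integer and let f_{n,k}(x) = k·∑_{j≥0} C(n-1, 2j+1)(x^j − x^{j+1}) + 2·∑_{j≥0} C(n, 2j) x^j ∈ ℤ[x]. Then f_{n,k} is self-reciprocal if and only if k = 0 or k = 2. -/
open Polynomial Finset

/-- The polynomial `f_{n,k}` arising from reversed Dickson polynomials, over ℤ. -/
noncomputable def fnk (n : ℕ) (k : ℤ) : ℤ[X] :=
  Polynomial.C k * ∑ j ∈ range (n + 1),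
      (Nat.choose (n - 1) (2 * j + 1) : ℤ[X]) * (X ^ j - X ^ (j + 1))
    + 2 * ∑ j ∈ range (n + 1), (Nat.choose n (2 * j) : ℤ[X]) * X ^ j

lemma coeff_fnk (n : ℕ) (k : ℤ) (i : ℕ) :
  (fnk n k).coeff i = k * ((n-1).choose (2*i+1) : ℤ)
    - k * (if i = 0 then 0 else ((n-1).choose (2*i-1) : ℤ))
    + 2 * (n.choose (2*i) : ℤ) := by
  have h2 : (2 : ℤ[X]) = Polynomial.C 2 := by norm_num
  unfold fnk
  rw [h2]
  simp only [coeff_add, coeff_C_mul, finset_sum_coeff, coeff_sub, coeff_X_pow, mul_sub,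
    Finset.sum_sub_distrib, coeff_natCast_mul, mul_ite, mul_one, mul_zero]
  rw [Finset.sum_ite_eq, Finset.sum_ite_eq]
  cases i with
  | zero => simp
  | succ i' =>
    simp only [add_left_inj, Finset.sum_ite_eq, Finset.mem_range, Nat.succ_ne_zero, if_false]
    have e1 : 2 * (i' + 1) - 1 = 2 * i' + 1 := by omega
    rw [e1]
    by_cases h : i' + 1 < n + 1
    · rw [if_pos h, if_pos (by omega), if_pos h]
    · rw [if_neg h, Nat.choose_eq_zero_of_lt (show n - 1 < 2*(i'+1)+1 by omega),
        Nat.choose_eq_zero_of_lt (show n < 2*(i'+1) by omega)]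
      by_cases h3 : i' < n + 1
      · rw [if_pos h3, if_neg h]; push_cast; ring
      · rw [if_neg h3, if_neg h, Nat.choose_eq_zero_of_lt (show n - 1 < 2*i'+1 by omega)]
        push_cast; ring

lemma coeff_fnk_zero_of_gt (m : ℕ) (k : ℤ) (i : ℕ) (hm : 1 ≤ m) (hi : m < i) :
    (fnk (2*m) k).coeff i = 0 := by
  rw [coeff_fnk, Nat.choose_eq_zero_of_lt (show 2*m - 1 < 2*i+1 by omega),
    Nat.choose_eq_zero_of_lt (show 2*m - 1 < 2*i-1 by omega),
    Nat.choose_eq_zero_of_lt (show 2*m < 2*i by omega), if_neg (by omega : ¬ i = 0)]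
  push_cast; ring

lemma coeff_fnk_two (m : ℕ) (i : ℕ) (hm : 1 ≤ m) :
    (fnk (2*m) 2).coeff i = 2 * ((2*m).choose (2*i+1) : ℤ) := by
  rw [coeff_fnk]
  cases i with
  | zero =>
    rw [if_pos rfl, Nat.mul_zero, Nat.zero_add, Nat.choose_one_right, Nat.choose_one_right,
      Nat.choose_zero_right]
    push_cast [Nat.cast_sub (by omega : 1 ≤ 2*m)]
    ring
  | succ i' =>
    rw [if_neg (by omega : ¬ i' + 1 = 0)]
    obtain ⟨n', hn'⟩ : ∃ n', 2*m = n' + 1 := ⟨2*m - 1, by omega⟩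
    rw [hn']
    have e0 : n' + 1 - 1 = n' := by omega
    have e1 : 2 * (i' + 1) + 1 = (2*i'+2) + 1 := by ring
    have e2 : 2 * (i' + 1) - 1 = (2*i'+1) := by omega
    have e3 : 2 * (i' + 1) = (2*i'+1) + 1 := by ring
    rw [e0, e1, e2, e3, Nat.choose_succ_succ' (n') (2*i'+2), Nat.choose_succ_succ (n') (2*i'+1)]
    push_cast; ring

lemma natDegree_fnk (m : ℕ) (k : ℤ) (hm : 1 ≤ m) (hk : k ≠ 2) :
    (fnk (2*m) k).natDegree = m := by
  have hc : (fnk (2*m) k).coeff m = 2 - k := by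
    rw [coeff_fnk, if_neg (by omega : ¬ m = 0),
      Nat.choose_eq_zero_of_lt (show 2*m - 1 < 2*m+1 by omega),
      show 2*m - 1 = 2*m - 1 from rfl]
    have : (2*m - 1).choose (2*m - 1) = 1 := Nat.choose_self _
    rw [this, Nat.choose_self]
    push_cast; ring
  refine le_antisymm ?_ (le_natDegree_of_ne_zero (by rw [hc]; intro h; apply hk; linarith))
  rw [natDegree_le_iff_coeff_eq_zero]
  exact fun i hi => coeff_fnk_zero_of_gt m k i hm hi

lemma natDegree_fnk_two (m : ℕ) (hm : 1 ≤ m) :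
    (fnk (2*m) 2).natDegree = m - 1 := by
  have hc : (fnk (2*m) 2).coeff (m-1) = 2 * (2*m) := by
    rw [coeff_fnk_two m _ hm, show 2*(m-1)+1 = 2*m - 1 by omega,
      Nat.choose_symm (by omega : 1 ≤ 2*m), Nat.choose_one_right]
    push_cast; ring
  refine le_antisymm ?_ (le_natDegree_of_ne_zero (by rw [hc]; positivity))
  rw [natDegree_le_iff_coeff_eq_zero]
  intro i hi
  rw [coeff_fnk_two m i hm, Nat.choose_eq_zero_of_lt (by omega)]
  simp

lemma coeff_fnk_m (m : ℕ) (k : ℤ) (hm : 1 ≤ m) : (fnk (2*m) k).coeff m = 2 - k := by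
  rw [coeff_fnk, if_neg (by omega : ¬ m = 0),
    Nat.choose_eq_zero_of_lt (show 2*m - 1 < 2*m+1 by omega),
    Nat.choose_self, Nat.choose_self]
  push_cast; ring

lemma coeff_fnk_at0 (m : ℕ) (k : ℤ) : (fnk (2*m) k).coeff 0 = k * ((2*m - 1 : ℕ) : ℤ) + 2 := by
  rw [coeff_fnk, if_pos rfl]
  norm_num

lemma coeff_fnk_k0 (n : ℕ) (i : ℕ) : (fnk n 0).coeff i = 2 * (n.choose (2*i) : ℤ) := by
  rw [coeff_fnk]; simp

/-- A polynomial is self-reciprocal iff it equals its reverse. -/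
theorem fnk_selfReciprocal_even (n : ℕ) (k : ℤ) (hn : 1 < n) (hev : Even n) :
    (fnk n k).reverse = fnk n k ↔ k = 0 ∨ k = 2 := by
  obtain ⟨m, hm⟩ := hev
  have hn2 : n = 2 * m := by omega
  subst hn2
  have hm1 : 1 ≤ m := by omega
  constructor
  · intro h
    by_cases hk : k = 2
    · right; exact hk
    · left
      have hd := natDegree_fnk m k hm1 hk
      have h0 : (fnk (2*m) k).coeff m = (fnk (2*m) k).coeff 0 := by
        conv_rhs => rw [← h]
        rw [coeff_reverse, hd, revAt_le (Nat.zero_le m), Nat.sub_zero]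
      rw [coeff_fnk_m m k hm1, coeff_fnk_at0 m k] at h0
      have hmul : k * (((2*m - 1 : ℕ) : ℤ) + 1) = 0 := by linear_combination -h0
      rcases mul_eq_zero.mp hmul with h | h
      · exact h
      · exfalso; have : (0:ℤ) ≤ ((2*m - 1 : ℕ) : ℤ) := Int.natCast_nonneg _; linarith
  · rintro (rfl | rfl)
    · have hd := natDegree_fnk m 0 hm1 (by norm_num)
      ext i
      rw [coeff_reverse, hd]
      by_cases hi : i ≤ m
      · rw [revAt_le hi, coeff_fnk_k0, coeff_fnk_k0,
          show 2*(m-i) = 2*m - 2*i by omega, Nat.choose_symm (by omega)]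
      · rw [revAt_eq_self_of_lt (by omega)]
    · have hd := natDegree_fnk_two m hm1
      ext i
      rw [coeff_reverse, hd]
      by_cases hi : i ≤ m - 1
      · rw [revAt_le hi, coeff_fnk_two m _ hm1, coeff_fnk_two m _ hm1,
          show 2*(m-1-i)+1 = 2*m - (2*i+1) by omega, Nat.choose_symm (by omega)]
      · rw [revAt_eq_self_of_lt (by omega)]
end

section
/- Let p be an odd prime and n even with base-p digit sum (weight) equal to 2. Then C(n, m) ≡ 0 (mod p) for every even m with 2 ≤ m ≤ n − 2. -/
theorem choose_weight_two_vanishes (p n : ℕ) (hp : p.Prime) (hodd : Odd p)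
    (hev : Even n) (hw : (Nat.digits p n).sum = 2) :
    ∀ m : ℕ, Even m → 2 ≤ m → m ≤ n - 2 → p ∣ Nat.choose n m := by
  intro m hm h2 hle
  haveI : Fact p.Prime := ⟨hp⟩
  have hp2 : 2 ≤ p := hp.two_le
  have hn : 4 ≤ n := by
    rcases hev with ⟨k, hk⟩
    rcases hm with ⟨j, hj⟩
    omega
  have hmn : m ≤ n := by omega
  -- key: parity of digit sum equals parity of number
  have hpar : ∀ k : ℕ, Even k → (Nat.digits p k).sum % 2 = 0 := by
    intro k hk
    have := Nat.modEq_digits_sum 2 p (Nat.odd_iff.mp hodd) k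
    have hk2 : k % 2 = 0 := Nat.even_iff.mp hk
    unfold Nat.ModEq at this
    omega
  -- if p ∤ choose, derive contradiction
  have hkum := sub_one_mul_padicValNat_choose_eq_sub_sum_digits (p := p) hmn
  apply dvd_of_one_le_padicValNat
  by_contra hcon
  have hv : padicValNat p (Nat.choose n m) = 0 := by omega
  rw [hv, Nat.mul_zero, hw] at hkum
  have hsum : (Nat.digits p m).sum + (Nat.digits p (n - m)).sum ≤ 2 := by omega
  have hmpos : (Nat.digits p m).sum ≠ 0 := by
    intro h0
    have : m = 0 := by
      by_contra hm0
      have : Nat.digits p m ≠ [] := Nat.digits_ne_nil_iff_ne_zero.mpr hm0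
      have hlast := Nat.getLast_digit_ne_zero p hm0
      have hmem : (Nat.digits p m).getLast this ∈ Nat.digits p m := List.getLast_mem this
      have : (Nat.digits p m).getLast this = 0 := by
        have := List.single_le_sum (fun x _ => Nat.zero_le x) _ hmem
        omega
      exact hlast this
    omega
  have hnmpos : (Nat.digits p (n - m)).sum ≠ 0 := by
    intro h0
    have : n - m = 0 := by
      by_contra hm0
      have : Nat.digits p (n - m) ≠ [] := Nat.digits_ne_nil_iff_ne_zero.mpr hm0
      have hlast := Nat.getLast_digit_ne_zero p hm0
      have hmem : (Nat.digits p (n-m)).getLast this ∈ Nat.digits p (n-m) :=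
        List.getLast_mem this
      have : (Nat.digits p (n-m)).getLast this = 0 := by
        have := List.single_le_sum (fun x _ => Nat.zero_le x) _ hmem
        omega
      exact hlast this
    omega
  have h1 : (Nat.digits p m).sum = 1 := by omega
  have := hpar m hm
  omega
end

section
/- Let n > 1 be even and k = 1 in characteristic 2. The polynomial f_{n,1}(x) = ∑_{j≥0} C(n−1,2j+1)(x^j + x^{j+1}) ∈ F_2[x] equals ∑_{j=0}^{n/2} C(n+1, 2j+1) x^j (mod 2), and this polynomial is self-reciprocal over F_2. -/
/-!
In characteristic 2, `(1 + y)^(2s+1) = (1 + y^2)^s (1 + y)`, so the odd-index coefficients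
`C(2s+1, 2j+1)` are those of `(1 + x)^s` (Lucas). Hence
`f_{n,1} = (1 + x) (1 + x)^(n/2 - 1) = (1 + x)^(n/2)`, which is the stated right-hand side and is
self-reciprocal.
-/

open Polynomial Finset

theorem CharTwo.natCast_choose_two_mul_add_one {R : Type*} [AddGroupWithOne R] [CharP R 2]
    (s j : ℕ) : ((2 * s + 1).choose (2 * j + 1) : R) = (s.choose j : R) := by
  have h := Choose.choose_modEq_choose_mod_mul_choose_div_nat (p := 2)
    (n := 2 * s + 1) (k := 2 * j + 1)
  rw [show (2 * s + 1) % 2 = 1 by omega, show (2 * j + 1) % 2 = 1 by omega,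
    show (2 * s + 1) / 2 = s by omega, show (2 * j + 1) / 2 = j by omega,
    Nat.choose_self, one_mul] at h
  exact (CharP.natCast_eq_natCast R 2).2 h

theorem Polynomial.sum_range_choose_mul_X_pow {R : Type*} [CommSemiring R] {s N : ℕ}
    (hN : s < N) : ∑ j ∈ range N, (s.choose j : R[X]) * X ^ j = (X + 1) ^ s := by
  calc ∑ j ∈ range N, (s.choose j : R[X]) * X ^ j
      = ∑ j ∈ range (s + 1), (s.choose j : R[X]) * X ^ j := by
        refine (sum_subset (range_subset_range.2 hN) fun j _ hj => ?_).symm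
        rw [Nat.choose_eq_zero_of_lt (by simpa using hj), Nat.cast_zero, zero_mul]
    _ = (X + 1) ^ s := by
        rw [add_pow]
        exact sum_congr rfl fun j _ => by rw [one_pow, mul_one, mul_comm]

theorem Polynomial.reverse_X_add_one_pow {R : Type*} [Semiring R] (m : ℕ) :
    ((X + 1 : R[X]) ^ m).reverse = (X + 1) ^ m := by
  nontriviality R
  have hmonic : (X + 1 : R[X]).Monic := by simpa using monic_X_add_C (1 : R)
  have hone : (1 : R[X]).reverse = 1 := by simpa using reverse_C (1 : R)
  have hX : (X : R[X]).reverse = 1 := by simpa [hone] using reverse_mul_X (1 : R[X])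
  have hlinear : (X + 1 : R[X]).reverse = X + 1 := by
    simpa [hX, add_comm] using reverse_add_C (X : R[X]) 1
  induction m with
  | zero => rw [pow_zero, hone]
  | succ m ih =>
    rw [pow_succ, reverse_mul (by simp [(hmonic.pow m).leadingCoeff, hmonic.leadingCoeff]), ih,
      hlinear]

theorem Polynomial.sum_range_choose_odd_mul_X_pow {R : Type*} [CommRing R] [CharP R 2]
    {s N : ℕ} (hN : s < N) :
    ∑ j ∈ range N, ((2 * s + 1).choose (2 * j + 1) : R[X]) * X ^ j = (X + 1) ^ s := by
  simp_rw [CharTwo.natCast_choose_two_mul_add_one]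
  exact sum_range_choose_mul_X_pow hN

theorem Polynomial.sum_range_choose_odd_mul_X_pow_add_X_pow_succ {R : Type*} [CommRing R]
    [CharP R 2] {s N : ℕ} (hN : s < N) :
    ∑ j ∈ range N, ((2 * s + 1).choose (2 * j + 1) : R[X]) * (X ^ j + X ^ (j + 1))
      = (X + 1) ^ (s + 1) := by
  calc _ = (∑ j ∈ range N, ((2 * s + 1).choose (2 * j + 1) : R[X]) * X ^ j) * (X + 1) := by
        rw [sum_mul]
        exact sum_congr rfl fun j _ => by ring
    _ = (X + 1) ^ (s + 1) := by rw [sum_range_choose_odd_mul_X_pow hN, pow_succ]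

theorem fn_char_two_even (n : ℕ) (hn : 1 < n) (hev : Even n) :
    ((∑ j ∈ range (n + 1),
        (Nat.choose (n - 1) (2 * j + 1) : Polynomial (ZMod 2)) * (X ^ j + X ^ (j + 1)))
      = ∑ j ∈ range (n / 2 + 1),
          (Nat.choose (n + 1) (2 * j + 1) : Polynomial (ZMod 2)) * X ^ j)
    ∧ (∑ j ∈ range (n + 1),
        (Nat.choose (n - 1) (2 * j + 1) : Polynomial (ZMod 2)) * (X ^ j + X ^ (j + 1))).reverse
      = ∑ j ∈ range (n + 1),
          (Nat.choose (n - 1) (2 * j + 1) : Polynomial (ZMod 2)) * (X ^ j + X ^ (j + 1)) := by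
  obtain ⟨t, rfl⟩ : ∃ t, n = 2 * t + 2 := by
    obtain ⟨r, hr⟩ := hev
    exact ⟨r - 1, by omega⟩
  rw [show 2 * t + 2 - 1 = 2 * t + 1 by omega, show 2 * t + 2 + 1 = 2 * (t + 1) + 1 by ring,
    show (2 * t + 2) / 2 + 1 = t + 2 by omega,
    sum_range_choose_odd_mul_X_pow_add_X_pow_succ (by omega),
    sum_range_choose_odd_mul_X_pow (by omega)]
  exact ⟨rfl, reverse_X_add_one_pow (t + 1)⟩
end
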